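/- arXiv:2111.08356 — 3 statements merged into one kernel-verified Lean document; each statement's English description precedes it below -/
import Mathlib

section
/- Let E and F be real normed vector spaces, X a type, n ≥ 1 a natural number, φ : X → E a map with ‖φ(x)‖ ≤ B for all x ∈ X (B ≥ 0), and ψ : E → F a linear map that is Lipschitz with constant L ≥ 0. Define the deep-set encoder g(D) = ψ((1/n) • ∑_{i=1}^n φ(D i)) for D : Fin n → X. Then for any two adjacent datasets D, D' : Fin n → X (i.e., there is an index j with D i = D' i for all i ≠ j), we have ‖g(D) − g(D')‖ ≤ (2/n) · L · B. -/
theorem Fintype.sum_sub_sum_eq_of_eq_off {ι M : Type*} [Fintype ι] [AddCommGroup M]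
    {f f' : ι → M} {j : ι} (h : ∀ i, i ≠ j → f i = f' i) :
    ∑ i, f i - ∑ i, f' i = f j - f' j := by
  rw [← Finset.sum_sub_distrib]
  exact Fintype.sum_eq_single j fun i hi => by rw [h i hi, sub_self]

theorem norm_smul_sum_sub_smul_sum_le_of_eq_off {ι X E : Type*} [Fintype ι]
    [SeminormedAddCommGroup E] [NormedSpace ℝ E] {φ : X → E} {B : ℝ} (hφ : ∀ x, ‖φ x‖ ≤ B)
    {c : ℝ} (hc : 0 ≤ c) {D D' : ι → X} {j : ι} (hj : ∀ i, i ≠ j → D i = D' i) :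
    ‖c • ∑ i, φ (D i) - c • ∑ i, φ (D' i)‖ ≤ c * (2 * B) := by
  have hsum : ∑ i, φ (D i) - ∑ i, φ (D' i) = φ (D j) - φ (D' j) :=
    Fintype.sum_sub_sum_eq_of_eq_off fun i hi => congrArg φ (hj i hi)
  rw [← smul_sub, hsum, norm_smul, Real.norm_of_nonneg hc]
  gcongr
  calc ‖φ (D j) - φ (D' j)‖ ≤ ‖φ (D j)‖ + ‖φ (D' j)‖ := norm_sub_le _ _
    _ ≤ 2 * B := by linarith [hφ (D j), hφ (D' j)]

theorem deepset_encoder_sensitivity_general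
    {E F : Type*} [NormedAddCommGroup E] [NormedSpace ℝ E]
    [NormedAddCommGroup F] [NormedSpace ℝ F]
    {X : Type*} {n : ℕ}
    (φ : X → E) (B : ℝ) (hφ : ∀ x : X, ‖φ x‖ ≤ B)
    (ψ : E →ₗ[ℝ] F) (L : ℝ) (hL : 0 ≤ L)
    (hψ : ∀ u v : E, ‖ψ u - ψ v‖ ≤ L * ‖u - v‖)
    (g : (Fin n → X) → F)
    (hg : ∀ D : Fin n → X, g D = ψ ((1 / (n : ℝ)) • ∑ i : Fin n, φ (D i)))
    (D D' : Fin n → X)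
    (hadj : ∃ j : Fin n, ∀ i : Fin n, i ≠ j → D i = D' i) :
    ‖g D - g D'‖ ≤ (2 / (n : ℝ)) * L * B := by
  obtain ⟨j, hj⟩ := hadj
  have hmean :=
    norm_smul_sum_sub_smul_sum_le_of_eq_off hφ (c := 1 / (n : ℝ)) (by positivity) hj
  calc ‖g D - g D'‖
      ≤ L * ‖(1 / (n : ℝ)) • ∑ i, φ (D i) - (1 / (n : ℝ)) • ∑ i, φ (D' i)‖ := by
        rw [hg D, hg D']; exact hψ _ _
    _ ≤ L * (1 / n * (2 * B)) := by gcongr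
    _ = 2 / n * L * B := by ring

/-- Lemma 1 of the paper: the sensitivity of a deep-set encoder
`g(D) = ψ((1/n) • ∑ i, φ (D i))`, with `ψ` linear and `L`-Lipschitz and `φ`
bounded in norm by `B`, is at most `(2/n) · L · B` over adjacent datasets. -/
theorem deepset_encoder_sensitivity
    {E F : Type*} [NormedAddCommGroup E] [NormedSpace ℝ E]
    [NormedAddCommGroup F] [NormedSpace ℝ F]
    {X : Type*} {n : ℕ} (hn : 1 ≤ n)
    (φ : X → E) (B : ℝ) (hB : 0 ≤ B) (hφ : ∀ x : X, ‖φ x‖ ≤ B)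
    (ψ : E →ₗ[ℝ] F) (L : ℝ) (hL : 0 ≤ L)
    (hψ : ∀ u v : E, ‖ψ u - ψ v‖ ≤ L * ‖u - v‖)
    (g : (Fin n → X) → F)
    (hg : ∀ D : Fin n → X, g D = ψ ((1 / (n : ℝ)) • ∑ i : Fin n, φ (D i)))
    (D D' : Fin n → X)
    (hadj : ∃ j : Fin n, ∀ i : Fin n, i ≠ j → D i = D' i) :
    ‖g D - g D'‖ ≤ (2 / (n : ℝ)) * L * B :=
  deepset_encoder_sensitivity_general φ B hφ ψ L hL hψ g hg D D' hadj
end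

section
/- Let E and F be real normed vector spaces, X a type, φ : X → E a map with ‖φ(x)‖ ≤ B for all x ∈ X (B ≥ 0), and ψ : E → F a linear map that is Lipschitz with constant L ≥ 0. For a finite multiset s over X with card(s) = n ≥ 1, define g(s) = ψ((1/n) • (sum of φ over the elements of s, with multiplicity)). Then for any two multisets s, t over X of the same cardinality n that differ in exactly one element (i.e., there exist a, b ∈ X and a multiset u with s = a ::ₘ u and t = b ::ₘ u), we have ‖g(s) − g(t)‖ ≤ (2/n) · L · B. -/
theorem Multiset.sum_map_cons_sub_sum_map_cons {α G : Type*} [AddCommGroup G] (f : α → G)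
    (a b : α) (u : Multiset α) :
    ((a ::ₘ u).map f).sum - ((b ::ₘ u).map f).sum = f a - f b := by
  simp only [Multiset.map_cons, Multiset.sum_cons, add_sub_add_right_eq_sub]

section DeepSet

variable {X E F : Type*} [SeminormedAddCommGroup E] [NormedSpace ℝ E] [SeminormedAddCommGroup F]

noncomputable def deepSetEncoder (φ : X → E) (ψ : E → F) (n : ℕ) (s : Multiset X) : F :=
  ψ ((1 / (n : ℝ)) • (s.map φ).sum)

theorem norm_deepSetEncoder_cons_sub_cons_le {φ : X → E} {B : ℝ} (hφ : ∀ x, ‖φ x‖ ≤ B)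
    {ψ : E → F} {L : ℝ} (hL : 0 ≤ L) (hψ : ∀ u v : E, ‖ψ u - ψ v‖ ≤ L * ‖u - v‖)
    (n : ℕ) (a b : X) (u : Multiset X) :
    ‖deepSetEncoder φ ψ n (a ::ₘ u) - deepSetEncoder φ ψ n (b ::ₘ u)‖ ≤ 2 / (n : ℝ) * L * B := by
  have hc : (0 : ℝ) ≤ 1 / (n : ℝ) := by positivity
  calc ‖deepSetEncoder φ ψ n (a ::ₘ u) - deepSetEncoder φ ψ n (b ::ₘ u)‖
      ≤ L * ‖(1 / (n : ℝ)) • ((a ::ₘ u).map φ).sum - (1 / (n : ℝ)) • ((b ::ₘ u).map φ).sum‖ :=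
        hψ _ _
    _ = L * (1 / (n : ℝ) * ‖φ a - φ b‖) := by
        rw [← smul_sub, Multiset.sum_map_cons_sub_sum_map_cons, norm_smul, Real.norm_of_nonneg hc]
    _ ≤ L * (1 / (n : ℝ) * (B + B)) := by
        gcongr
        exact norm_sub_le_of_le (hφ a) (hφ b)
    _ = 2 / (n : ℝ) * L * B := by ring

end DeepSet

theorem deepset_encoder_sensitivity_multiset_general
    {E F : Type*} [NormedAddCommGroup E] [NormedSpace ℝ E]
    [NormedAddCommGroup F] [NormedSpace ℝ F]
    {X : Type*} {n : ℕ}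
    (φ : X → E) (B : ℝ) (hφ : ∀ x : X, ‖φ x‖ ≤ B)
    (ψ : E →ₗ[ℝ] F) (L : ℝ) (hL : 0 ≤ L)
    (hψ : ∀ u v : E, ‖ψ u - ψ v‖ ≤ L * ‖u - v‖)
    (g : Multiset X → F)
    (hg : ∀ s : Multiset X, g s = ψ ((1 / (n : ℝ)) • (s.map φ).sum))
    (s t : Multiset X)
    (hadj : ∃ (a b : X) (u : Multiset X), s = a ::ₘ u ∧ t = b ::ₘ u) :
    ‖g s - g t‖ ≤ (2 / (n : ℝ)) * L * B := by
  obtain ⟨a, b, u, rfl, rfl⟩ := hadj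
  obtain rfl : g = deepSetEncoder φ ψ n := funext hg
  exact norm_deepSetEncoder_cons_sub_cons_le hφ hL hψ n a b u

/-- Lemma 1 of the paper for unordered datasets (multisets): the deep-set encoder
`g(s) = ψ((1/n) • (s.map φ).sum)`, with `ψ` linear and `L`-Lipschitz and `φ`
bounded in norm by `B`, changes by at most `(2/n) · L · B` when a single element
of the size-`n` dataset is replaced. -/
theorem deepset_encoder_sensitivity_multiset
    {E F : Type*} [NormedAddCommGroup E] [NormedSpace ℝ E]
    [NormedAddCommGroup F] [NormedSpace ℝ F]
    {X : Type*} {n : ℕ} (hn : 1 ≤ n)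
    (φ : X → E) (B : ℝ) (hB : 0 ≤ B) (hφ : ∀ x : X, ‖φ x‖ ≤ B)
    (ψ : E →ₗ[ℝ] F) (L : ℝ) (hL : 0 ≤ L)
    (hψ : ∀ u v : E, ‖ψ u - ψ v‖ ≤ L * ‖u - v‖)
    (g : Multiset X → F)
    (hg : ∀ s : Multiset X, g s = ψ ((1 / (n : ℝ)) • (s.map φ).sum))
    (s t : Multiset X)
    (hs : Multiset.card s = n) (ht : Multiset.card t = n)
    (hadj : ∃ (a b : X) (u : Multiset X), s = a ::ₘ u ∧ t = b ::ₘ u) :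
    ‖g s - g t‖ ≤ (2 / (n : ℝ)) * L * B :=
  deepset_encoder_sensitivity_multiset_general φ B hφ ψ L hL hψ g hg s t hadj
end

section
/- Let 0 < ε < 1, 0 < δ < 1, Δ > 0, and let a, b ∈ ℝ with |a − b| ≤ Δ. Set σ² = 2Δ² · log(1.25/δ) / ε². Then for every measurable set s ⊆ ℝ, the Gaussian measures with means a and b and variance σ² satisfy N(a, σ²)(s) ≤ e^ε · N(b, σ²)(s) + δ. -/
/-!
On the event that the privacy loss `log (p_a x / p_b x) = (a - b) (2x - a - b) / 2σ²` is at most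
`ε`, the density of `N(a, σ²)` is at most `e^ε` times that of `N(b, σ²)`, so
`N(a, σ²)(s) ≤ e^ε N(b, σ²)(s) + N(a, σ²)(loss > ε)`. Writing the output as `a + σZ` with `Z`
standard normal, the loss exceeds `ε` only if `±Z > σε/Δ - Δ/2σ = k - ε/2k`, where
`k = √(2 log (1.25/δ))`. A Gaussian tail bound (Mills' inequality when `δ ≤ 1/2`, the bound
`1/2 + |t|/√(2π)` for a negative threshold `t` otherwise) shows that this has probability at most
`1.25 e^{-k²/2} = δ`.
-/

open MeasureTheory ProbabilityTheory Real Set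
open scoped NNReal ENNReal

theorem MeasureTheory.Measure.withDensity_apply_le_mul_add {α : Type*} [MeasurableSpace α]
    (μ : Measure α) {f : α → ℝ≥0∞} (hf : Measurable f) (c : ℝ≥0∞) {s : Set α}
    (hs : MeasurableSet s) :
    μ.withDensity f s ≤ c * μ s + μ.withDensity f {x | c < f x} := by
  have hgood : MeasurableSet (s ∩ {x | f x ≤ c}) := hs.inter (measurableSet_le hf measurable_const)
  calc μ.withDensity f s
      ≤ μ.withDensity f (s ∩ {x | f x ≤ c}) + μ.withDensity f {x | c < f x} := by
        refine (measure_mono fun x hx ↦ ?_).trans (measure_union_le _ _)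
        by_cases hfx : f x ≤ c
        exacts [Or.inl ⟨hx, hfx⟩, Or.inr (not_le.mp hfx)]
    _ ≤ c * μ s + μ.withDensity f {x | c < f x} := by
        gcongr
        rw [withDensity_apply _ hgood]
        calc ∫⁻ x in s ∩ {x | f x ≤ c}, f x ∂μ ≤ ∫⁻ _ in s ∩ {x | f x ≤ c}, c ∂μ :=
              setLIntegral_mono measurable_const fun x hx ↦ hx.2
          _ ≤ c * μ s := by
              rw [setLIntegral_const]
              exact mul_le_mul_right (measure_mono inter_subset_left) c

noncomputable def gaussianPrivacyLoss (a b : ℝ) (v : ℝ≥0) (x : ℝ) : ℝ :=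
  (a - b) * (2 * x - a - b) / (2 * v)

theorem measurable_gaussianPrivacyLoss (a b : ℝ) (v : ℝ≥0) :
    Measurable (gaussianPrivacyLoss a b v) := by
  unfold gaussianPrivacyLoss
  fun_prop

theorem gaussianPDFReal_eq_exp_gaussianPrivacyLoss_mul (a b : ℝ) (v : ℝ≥0) (x : ℝ) :
    gaussianPDFReal a v x = rexp (gaussianPrivacyLoss a b v x) * gaussianPDFReal b v x := by
  rw [gaussianPDFReal, gaussianPDFReal, gaussianPrivacyLoss, mul_left_comm, ← exp_add]
  congr 3
  ring

theorem gaussianReal_eq_withDensity_exp_gaussianPrivacyLoss (a b : ℝ) {v : ℝ≥0} (hv : v ≠ 0) :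
    gaussianReal a v =
      (gaussianReal b v).withDensity
        fun x ↦ ENNReal.ofReal (rexp (gaussianPrivacyLoss a b v x)) := by
  rw [gaussianReal_of_var_ne_zero _ hv, gaussianReal_of_var_ne_zero _ hv,
    ← withDensity_mul _ (measurable_gaussianPDF b v)
      (measurable_gaussianPrivacyLoss a b v).exp.ennreal_ofReal]
  congr 1
  funext x
  rw [Pi.mul_apply, gaussianPDF, gaussianPDF, gaussianPDFReal_eq_exp_gaussianPrivacyLoss_mul a b,
    ENNReal.ofReal_mul (exp_pos _).le, mul_comm]

theorem gaussianReal_apply_le_exp_mul_add (a b : ℝ) {v : ℝ≥0} (hv : v ≠ 0) (ε : ℝ) {s : Set ℝ}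
    (hs : MeasurableSet s) :
    gaussianReal a v s ≤ ENNReal.ofReal (rexp ε) * gaussianReal b v s
      + gaussianReal a v {x | ε < gaussianPrivacyLoss a b v x} := by
  have h := (gaussianReal b v).withDensity_apply_le_mul_add
    (measurable_gaussianPrivacyLoss a b v).exp.ennreal_ofReal (ENNReal.ofReal (rexp ε)) hs
  rw [← gaussianReal_eq_withDensity_exp_gaussianPrivacyLoss a b hv] at h
  simpa only [ENNReal.ofReal_lt_ofReal_iff (exp_pos _), exp_lt_exp] using h

instance instIsNegInvariantGaussianRealZero (v : ℝ≥0) : (gaussianReal 0 v).IsNegInvariant :=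
  ⟨by rw [Measure.neg_def]; simpa using gaussianReal_map_neg (μ := 0) (v := v)⟩

theorem gaussianReal_eq_map_gaussianReal_zero_one (μ : ℝ) (v : ℝ≥0) :
    gaussianReal μ v = (gaussianReal 0 1).map (fun z ↦ √v * z + μ) := by
  rw [show (fun z ↦ √v * z + μ) = (· + μ) ∘ (√v * ·) from rfl,
    ← Measure.map_map (measurable_add_const μ) (measurable_const_mul _),
    gaussianReal_map_const_mul, gaussianReal_map_add_const]
  congr
  · ring
  · ext; simp

theorem gaussianReal_setOf_lt_gaussianPrivacyLoss_le (a b : ℝ) {v : ℝ≥0} (hv : v ≠ 0) {ε Δ : ℝ}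
    (hε : 0 ≤ ε) (hab : |a - b| ≤ Δ) :
    gaussianReal a v {x | ε < gaussianPrivacyLoss a b v x}
      ≤ gaussianReal 0 1 (Ioi (√v * ε / Δ - Δ / (2 * √v))) := by
  have hσ : 0 < √(v : ℝ) := sqrt_pos.2 (by positivity)
  have hσv : √(v : ℝ) ^ 2 = v := sq_sqrt v.2
  -- the loss exceeds `ε` iff `z > √v ε / u - u / 2√v`, a threshold decreasing in `u = |a - b|`
  have key : ∀ u z, 0 ≤ u → u ≤ Δ → ε < u * (2 * √v * z + u) / (2 * √v ^ 2) →
      √v * ε / Δ - Δ / (2 * √v) < z := by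
    intro u z hu huΔ h
    rw [lt_div_iff₀ (by positivity)] at h
    have hΔ : 0 < Δ := by
      rcases hu.eq_or_lt with rfl | hu
      · nlinarith
      · linarith
    rw [div_sub_div _ _ hΔ.ne' (by positivity), div_lt_iff₀ (by positivity)]
    nlinarith [mul_nonneg (sub_nonneg.2 huΔ) (mul_nonneg hε (sq_nonneg √(v : ℝ))),
      mul_nonneg hu (mul_nonneg hΔ.le (sub_nonneg.2 huΔ))]
  rw [gaussianReal_eq_map_gaussianReal_zero_one, Measure.map_apply (by fun_prop)
    (measurableSet_lt measurable_const (measurable_gaussianPrivacyLoss a b v))]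
  have hloss : ∀ z, gaussianPrivacyLoss a b v (√v * z + a)
      = (a - b) * (2 * √v * z + (a - b)) / (2 * √v ^ 2) := by
    intro z; rw [gaussianPrivacyLoss, hσv]; ring_nf
  rcases le_total 0 (a - b) with hba | hab'
  · refine measure_mono fun z hz ↦ key (a - b) z hba ((le_abs_self _).trans hab) ?_
    simpa [hloss] using hz
  · rw [← Measure.measure_preimage_neg]
    refine measure_mono fun z hz ↦ key (b - a) z (by linarith)
      ((abs_sub_comm a b ▸ le_abs_self (b - a)).trans hab) ?_
    simp only [mem_preimage, mem_ofPred_eq, hloss] at hz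
    exact hz.trans_eq (by ring)

theorem gaussianPDFReal_le_inv_sqrt (μ : ℝ) (v : ℝ≥0) (x : ℝ) :
    gaussianPDFReal μ v x ≤ (√(2 * π * v))⁻¹ := by
  rw [gaussianPDFReal]
  refine mul_le_of_le_one_right (by positivity) (exp_le_one_iff.2 ?_)
  exact div_nonpos_of_nonpos_of_nonneg (neg_nonpos.2 (sq_nonneg _)) (by positivity)

theorem gaussianReal_apply_le_mul_volume (μ : ℝ) {v : ℝ≥0} (hv : v ≠ 0) (s : Set ℝ) :
    gaussianReal μ v s ≤ ENNReal.ofReal (√(2 * π * v))⁻¹ * volume s := by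
  rw [gaussianReal_apply _ hv, ← setLIntegral_const]
  exact lintegral_mono fun x ↦ ENNReal.ofReal_le_ofReal (gaussianPDFReal_le_inv_sqrt μ v x)

theorem gaussianReal_real_Ioi_le_half (v : ℝ≥0) {t : ℝ} (ht : 0 ≤ t) :
    (gaussianReal 0 v).real (Ioi t) ≤ 1 / 2 := by
  have hsymm : (gaussianReal 0 v).real (Iio 0) = (gaussianReal 0 v).real (Ioi 0) := by
    rw [measureReal_def, measureReal_def, ← Measure.measure_neg _ (Ioi 0), neg_Ioi, neg_zero]
  have hsum : (gaussianReal 0 v).real (Iio 0) + (gaussianReal 0 v).real (Ioi 0) ≤ 1 := by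
    rw [← measureReal_union Ioi_disjoint_Iio_same.symm measurableSet_Ioi]
    exact measureReal_le_one
  linarith [measureReal_mono (μ := gaussianReal 0 v) (Ioi_subset_Ioi ht)]

theorem gaussianReal_real_Ioi_le_half_add {v : ℝ≥0} (hv : v ≠ 0) {t : ℝ} (ht : t ≤ 0) :
    (gaussianReal 0 v).real (Ioi t) ≤ 1 / 2 + -t * (√(2 * π * v))⁻¹ := by
  have hIoc : (gaussianReal 0 v).real (Ioc t 0) ≤ -t * (√(2 * π * v))⁻¹ := by
    have h := gaussianReal_apply_le_mul_volume 0 hv (Ioc t 0)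
    rw [Real.volume_Ioc, ← ENNReal.ofReal_mul (by positivity), zero_sub, mul_comm] at h
    exact ENNReal.toReal_le_of_le_ofReal (mul_nonneg (neg_nonneg.2 ht) (by positivity)) h
  calc (gaussianReal 0 v).real (Ioi t)
      ≤ (gaussianReal 0 v).real (Ioc t 0) + (gaussianReal 0 v).real (Ioi 0) := by
        rw [← Ioc_union_Ioi_eq_Ioi ht]
        exact measureReal_union_le _ _
    _ ≤ 1 / 2 + -t * (√(2 * π * v))⁻¹ := by
        linarith [gaussianReal_real_Ioi_le_half v le_rfl]

theorem gaussianReal_real_Ioi_le_div_mul_gaussianPDFReal {v : ℝ≥0} (hv : v ≠ 0) {t : ℝ}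
    (ht : 0 < t) :
    (gaussianReal 0 v).real (Ioi t) ≤ v / t * gaussianPDFReal 0 v t := by
  rw [measureReal_def, gaussianReal_apply_eq_integral _ hv, ENNReal.toReal_ofReal
    (setIntegral_nonneg measurableSet_Ioi fun x _ ↦ gaussianPDFReal_nonneg 0 v x)]
  -- on `x > t`, the exponent `-x² / 2v` lies below its tangent line at `t`
  have hpoint : ∀ x ∈ Ioi t, gaussianPDFReal 0 v x
      ≤ gaussianPDFReal 0 v t * rexp (t * t / v) * rexp (-(t / v) * x) := by
    intro x _
    simp only [gaussianPDFReal, mul_assoc, ← exp_add]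
    gcongr
    rw [← sub_nonneg]
    convert div_nonneg (sq_nonneg (x - t)) (by positivity : (0 : ℝ) ≤ 2 * v) using 1
    field_simp
    ring
  calc ∫ x in Ioi t, gaussianPDFReal 0 v x
      ≤ ∫ x in Ioi t, gaussianPDFReal 0 v t * rexp (t * t / v) * rexp (-(t / v) * x) :=
        setIntegral_mono_on (integrable_gaussianPDFReal 0 v).integrableOn
          ((exp_neg_integrableOn_Ioi t (by positivity)).const_mul _) measurableSet_Ioi hpoint
    _ = gaussianPDFReal 0 v t * rexp (t * t / v) * (-rexp (-(t / v) * t) / -(t / v)) := by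
        rw [integral_const_mul, integral_exp_mul_Ioi (by simp; positivity)]
    _ = v / t * gaussianPDFReal 0 v t := by
        rw [neg_mul, exp_neg, show t / v * t = t * t / v by ring]
        field_simp

theorem inv_sqrt_two_mul_pi_le : (√(2 * π))⁻¹ ≤ 0.4 := by
  rw [inv_le_comm₀ (by positivity) (by norm_num)]
  exact le_sqrt_of_sq_le (by nlinarith [pi_gt_d2])

theorem gaussianReal_zero_one_real_Ioi_sub_le_of_two_log_two_lt {ε k : ℝ} (hε : ε < 1) (hk : 0 < k)
    (hk2 : 2 * log 2 < k ^ 2) :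
    (gaussianReal 0 1).real (Ioi (k - ε / (2 * k))) ≤ 1.25 * rexp (-k ^ 2 / 2) := by
  set t := k - ε / (2 * k) with ht_def
  have hkt : 2 * k * t = 2 * k ^ 2 - ε := by rw [ht_def]; field_simp
  have ht : 0.7 ≤ t := by nlinarith [log_two_gt_d9]
  have hexp : rexp (-t ^ 2 / 2) ≤ rexp (1 / 2) * rexp (-k ^ 2 / 2) := by
    rw [← exp_add]; gcongr; nlinarith
  have hexp_half : rexp (1 / 2) ≤ 2 := by
    have := exp_bound_div_one_sub_of_interval' (x := 1 / 2) (by norm_num) (by norm_num)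
    norm_num at this ⊢; linarith
  calc (gaussianReal 0 1).real (Ioi t) ≤ 1 / t * gaussianPDFReal 0 1 t := by
        simpa using gaussianReal_real_Ioi_le_div_mul_gaussianPDFReal one_ne_zero
          (by linarith : 0 < t)
    _ = 1 / t * ((√(2 * π))⁻¹ * rexp (-t ^ 2 / 2)) := by simp [gaussianPDFReal]
    _ ≤ 1 / 0.7 * (0.4 * (2 * rexp (-k ^ 2 / 2))) := by
        gcongr
        exacts [inv_sqrt_two_mul_pi_le, hexp.trans (by gcongr)]
    _ ≤ 1.25 * rexp (-k ^ 2 / 2) := by nlinarith [exp_pos (-k ^ 2 / 2)]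

/-- For `k = √(2 log (1.25 / δ))` the right-hand side is `δ`. -/
theorem gaussianReal_zero_one_Ioi_sub_le {ε k : ℝ} (hε : ε < 1) (hk : 0 < k) :
    gaussianReal 0 1 (Ioi (k - ε / (2 * k))) ≤ ENNReal.ofReal (1.25 * rexp (-k ^ 2 / 2)) := by
  rw [← ofReal_measureReal]
  refine ENNReal.ofReal_le_ofReal ?_
  rcases le_or_gt (1.25 * rexp (-k ^ 2 / 2)) (1 / 2) with hδ | hδ
  · refine gaussianReal_zero_one_real_Ioi_sub_le_of_two_log_two_lt hε hk ?_
    have : rexp (-k ^ 2 / 2) < rexp (-log 2) := by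
      rw [exp_neg, exp_log two_pos]; linarith
    linarith [exp_lt_exp.1 this]
  set t := k - ε / (2 * k) with ht_def
  rcases le_or_gt 0 t with ht | ht
  · linarith [gaussianReal_real_Ioi_le_half 1 ht]
  rcases le_or_gt 1 (1.25 * rexp (-k ^ 2 / 2)) with hδ1 | hδ1
  · exact measureReal_le_one.trans hδ1
  have hkt : 2 * k * t = 2 * k ^ 2 - ε := by rw [ht_def]; field_simp
  have hexp : 1 - k ^ 2 / 2 ≤ rexp (-k ^ 2 / 2) := by
    linarith [add_one_le_exp (-k ^ 2 / 2)]
  have hk_lower : 0.6 < k := by nlinarith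
  have hk2 : k ^ 2 < 1 / 2 := by nlinarith
  calc (gaussianReal 0 1).real (Ioi t) ≤ 1 / 2 + -t * (√(2 * π))⁻¹ := by
        simpa using gaussianReal_real_Ioi_le_half_add one_ne_zero ht.le
    _ ≤ 1 / 2 + -t * 0.4 := by gcongr; exacts [by linarith, inv_sqrt_two_mul_pi_le]
    _ ≤ 1.25 * rexp (-k ^ 2 / 2) := by nlinarith

/-- The Gaussian mechanism guarantee of Dwork et al. (one-dimensional outputs):
with `σ² = 2Δ² log(1.25/δ) / ε²` and `|a − b| ≤ Δ`, for every measurable set `s`,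
`N(a, σ²)(s) ≤ e^ε · N(b, σ²)(s) + δ`. -/
theorem gaussian_mechanism_dp
    (ε δ Δ : ℝ) (hε : 0 < ε) (hε1 : ε < 1) (hδ : 0 < δ) (hδ1 : δ < 1)
    (hΔ : 0 < Δ)
    (a b : ℝ) (hab : |a - b| ≤ Δ)
    (σ2 : NNReal) (hσ2 : (σ2 : ℝ) = 2 * Δ ^ 2 * Real.log (1.25 / δ) / ε ^ 2)
    (s : Set ℝ) (hs : MeasurableSet s) :
    gaussianReal a σ2 s ≤ ENNReal.ofReal (Real.exp ε) * gaussianReal b σ2 s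
      + ENNReal.ofReal δ := by
  have hL : 0 < log (1.25 / δ) := log_pos (by rw [lt_div_iff₀ hδ]; linarith)
  set k := √(2 * log (1.25 / δ))
  have hk : 0 < k := by positivity
  have hk2 : k ^ 2 = 2 * log (1.25 / δ) := sq_sqrt (by positivity)
  have hσ : √(σ2 : ℝ) = Δ * k / ε := by
    rw [← sqrt_sq (by positivity : 0 ≤ Δ * k / ε), hσ2, div_pow, mul_pow, hk2]
    ring_nf
  have hv : σ2 ≠ 0 := by
    rintro rfl
    simp only [NNReal.coe_zero, sqrt_zero] at hσ
    exact (by positivity : 0 < Δ * k / ε).ne hσ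
  have hthreshold : √(σ2 : ℝ) * ε / Δ - Δ / (2 * √(σ2 : ℝ)) = k - ε / (2 * k) := by
    rw [hσ]; field_simp
  have hδ_eq : 1.25 * rexp (-k ^ 2 / 2) = δ := by
    rw [hk2, show -(2 * log (1.25 / δ)) / 2 = -log (1.25 / δ) by ring, exp_neg,
      exp_log (by positivity)]
    field_simp
  calc gaussianReal a σ2 s
      ≤ ENNReal.ofReal (rexp ε) * gaussianReal b σ2 s
        + gaussianReal a σ2 {x | ε < gaussianPrivacyLoss a b σ2 x} :=
        gaussianReal_apply_le_exp_mul_add a b hv ε hs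
    _ ≤ ENNReal.ofReal (rexp ε) * gaussianReal b σ2 s
        + gaussianReal 0 1 (Ioi (√(σ2 : ℝ) * ε / Δ - Δ / (2 * √(σ2 : ℝ)))) :=
        add_le_add_right (gaussianReal_setOf_lt_gaussianPrivacyLoss_le a b hv hε.le hab) _
    _ ≤ ENNReal.ofReal (rexp ε) * gaussianReal b σ2 s + ENNReal.ofReal δ := by
        rw [hthreshold, ← hδ_eq]
        exact add_le_add_right (gaussianReal_zero_one_Ioi_sub_le hε1 hk) _
end
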